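/- arXiv:2112.00624 — 4 statements merged into one kernel-verified Lean document; each statement's English description precedes it below -/
import Mathlib

section
/- Let W be a nonsingular n×n real matrix. Then min_{‖x‖₂ = 1} ‖Wx‖_∞ ≤ |det W|^{1/n} · √π / (2 · Γ(n/2 + 1)^{1/n}). -/
/-!
Let `μ` be the minimum of `‖W x‖_∞` over the Euclidean unit sphere, so that `μ ‖y‖₂ ≤ ‖W y‖_∞`
for all `y`. Then the preimage under `W` of the cube `[-μ, μ]ⁿ` lies in the Euclidean unit ball,
and comparing volumes gives `(2μ)ⁿ / |det W| ≤ π^{n/2} / Γ(n/2 + 1)`; take `n`-th roots.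
-/

open Matrix Real Metric MeasureTheory WithLp

theorem ContinuousLinearMap.exists_norm_eq_one_forall_mul_norm_le
    {E F : Type*} [NormedAddCommGroup E] [NormedSpace ℝ E] [ProperSpace E] [Nontrivial E]
    [SeminormedAddCommGroup F] [NormedSpace ℝ F] (f : E →L[ℝ] F) :
    ∃ x, ‖x‖ = 1 ∧ ∀ y, ‖f x‖ * ‖y‖ ≤ ‖f y‖ := by
  obtain ⟨x, hx, hmin⟩ := (isCompact_sphere (0 : E) 1).exists_isMinOn
    (NormedSpace.sphere_nonempty.mpr zero_le_one) (continuous_norm.comp f.continuous).continuousOn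
  rw [mem_sphere_zero_iff_norm] at hx
  refine ⟨x, hx, fun y => ?_⟩
  rcases eq_or_ne y 0 with rfl | hy
  · simp
  have hy' : 0 < ‖y‖ := norm_pos_iff.mpr hy
  have hmin_y := hmin (show ‖y‖⁻¹ • y ∈ sphere (0 : E) 1 by
    rw [mem_sphere_zero_iff_norm, norm_smul, norm_inv, norm_norm, inv_mul_cancel₀ hy'.ne'])
  simp only [Set.mem_ofPred_eq, Function.comp_apply, map_smul, norm_smul, norm_inv, norm_norm]
    at hmin_y
  rwa [le_inv_mul_iff₀ hy', mul_comm] at hmin_y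

theorem Matrix.volume_preimage_toLin'_closedBall {ι : Type*} [Fintype ι] [DecidableEq ι]
    {W : Matrix ι ι ℝ} (hW : W.det ≠ 0) {r : ℝ} (hr : 0 ≤ r) :
    volume (toLin' W ⁻¹' closedBall 0 r) = ENNReal.ofReal ((2 * r) ^ Fintype.card ι / |W.det|) := by
  rw [Measure.addHaar_preimage_linearMap _ (by rwa [LinearMap.det_toLin']),
    Real.volume_pi_closedBall _ hr, LinearMap.det_toLin',
    ← ENNReal.ofReal_mul (by positivity), abs_inv, div_eq_mul_inv, mul_comm]

theorem Matrix.two_mul_pow_card_div_le_of_forall_mul_norm_le {ι : Type*} [Fintype ι]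
    [Nonempty ι] [DecidableEq ι] {W : Matrix ι ι ℝ} (hW : W.det ≠ 0) {μ : ℝ} (hμ : 0 < μ)
    (h : ∀ y : ι → ℝ, μ * ‖toLp 2 y‖ ≤ ‖W *ᵥ y‖) :
    (2 * μ) ^ Fintype.card ι / |W.det| ≤
      √π ^ Fintype.card ι / Gamma (Fintype.card ι / 2 + 1) := by
  have hsub : toLin' W ⁻¹' closedBall 0 μ ⊆ toLp 2 ⁻¹' closedBall (0 : EuclideanSpace ℝ ι) 1 := by
    intro y hy
    simp only [Set.mem_preimage, mem_closedBall_zero_iff, toLin'_apply] at hy ⊢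
    exact le_of_mul_le_mul_left (by simpa using (h y).trans hy) hμ
  have hvol := measure_mono (μ := volume) hsub
  rw [volume_preimage_toLin'_closedBall hW hμ.le, (PiLp.volume_preserving_toLp ι).measure_preimage
    measurableSet_closedBall.nullMeasurableSet, EuclideanSpace.volume_closedBall,
    ENNReal.ofReal_one, one_pow, one_mul] at hvol
  exact (ENNReal.ofReal_le_ofReal_iff (by positivity)).mp hvol

theorem le_rpow_mul_div_of_two_mul_pow_div_le {n : ℕ} (hn : n ≠ 0) {μ D s G : ℝ} (hμ : 0 ≤ μ)
    (hD : 0 < D) (hs : 0 ≤ s) (hG : 0 < G) (h : (2 * μ) ^ n / D ≤ s ^ n / G) :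
    μ ≤ D ^ ((1 : ℝ) / n) * s / (2 * G ^ ((1 : ℝ) / n)) := by
  rw [le_div_iff₀ (by positivity), ← pow_le_pow_iff_left₀ (by positivity) (by positivity) hn,
    mul_pow, mul_pow, mul_pow, one_div, rpow_inv_natCast_pow hG.le hn,
    rpow_inv_natCast_pow hD.le hn]
  rw [div_le_div_iff₀ hD hG] at h
  convert h using 1 <;> ring

/-- `min_{‖x‖₂ = 1} ‖Wx‖_∞ ≤ |det W|^{1/n} · √π / (2 Γ(n/2+1)^{1/n})`. -/
theorem min_sup_norm_le
    (n : ℕ) (hn : 0 < n)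
    (W : Matrix (Fin n) (Fin n) ℝ) (hW : W.det ≠ 0) :
    ∃ x : Fin n → ℝ, Real.sqrt (∑ i, x i ^ 2) = 1 ∧
      ‖W.mulVec x‖ ≤
        |W.det| ^ ((1 : ℝ) / n) * Real.sqrt π /
          (2 * Real.Gamma ((n : ℝ) / 2 + 1) ^ ((1 : ℝ) / n)) := by
  have : Nonempty (Fin n) := ⟨⟨0, hn⟩⟩
  let A : EuclideanSpace ℝ (Fin n) →L[ℝ] (Fin n → ℝ) :=
    (toLin' W).toContinuousLinearMap.comp (PiLp.continuousLinearEquiv 2 ℝ _).toContinuousLinearMap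
  obtain ⟨x, hx, hmin⟩ := A.exists_norm_eq_one_forall_mul_norm_le
  have hx' : √(∑ i, x i ^ 2) = 1 := by simpa [EuclideanSpace.norm_eq] using hx
  refine ⟨x, hx', ?_⟩
  have hμ : 0 < ‖W *ᵥ x‖ := norm_pos_iff.mpr fun h0 => by
    simp [eq_zero_of_mulVec_eq_zero hW h0] at hx'
  have hvol := two_mul_pow_card_div_le_of_forall_mul_norm_le hW hμ fun y => hmin (toLp 2 y)
  rw [Fintype.card_fin] at hvol
  exact le_rpow_mul_div_of_two_mul_pow_div_le hn.ne' hμ.le (abs_pos.mpr hW) (sqrt_nonneg π)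
    (Gamma_pos_of_pos (by positivity)) hvol
end

section
/- There exists a constant C > 0 such that for every n ≥ 1 and every n×n real matrix W whose columns w₁,…,wₙ satisfy (1/n) Σᵢ ‖wᵢ‖₂ ≤ 1, there exists a unit vector x ∈ ℝⁿ (‖x‖₂ = 1) with ‖Wx‖_∞ ≤ C/√n. -/
/-!
If `W` is singular, a unit vector in its kernel works. Otherwise Hadamard's inequality and AM–GM
give `|det W| ≤ ∏ ‖wᵢ‖ ≤ (mean ‖wᵢ‖)ⁿ ≤ 1`, hence `|det W⁻¹| ≥ 1`, and AM–GM on the eigenvalues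
of `(W⁻¹)ᵀ W⁻¹` turns this into `‖W⁻¹‖_F² ≥ n`. Choosing signs greedily gives `ε ∈ {±1}ⁿ` with
`‖W⁻¹ ε‖₂² ≥ ‖W⁻¹‖_F² ≥ n`, so `x = W⁻¹ ε / ‖W⁻¹ ε‖₂` satisfies
`‖W x‖_∞ = 1 / ‖W⁻¹ ε‖₂ ≤ 1 / √n`.
-/

open Matrix Real Finset

theorem Real.prod_le_arith_mean_pow {ι : Type*} (s : Finset ι) (f : ι → ℝ)
    (hf : ∀ i ∈ s, 0 ≤ f i) : ∏ i ∈ s, f i ≤ ((∑ i ∈ s, f i) / #s) ^ #s := by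
  rcases s.eq_empty_or_nonempty with rfl | hs
  · simp
  have hcard : (0 : ℝ) < #s := by exact_mod_cast hs.card_pos
  have amgm := geom_mean_le_arith_mean_weighted s (fun _ => (#s : ℝ)⁻¹) f
    (fun _ _ => by positivity) (by simp [hcard.ne']) hf
  calc ∏ i ∈ s, f i = (∏ i ∈ s, f i ^ (#s : ℝ)⁻¹) ^ #s := by
        rw [← prod_pow]
        refine prod_congr rfl fun i hi => ?_
        rw [← rpow_natCast, ← rpow_mul (hf i hi), inv_mul_cancel₀ hcard.ne', rpow_one]
    _ ≤ ((∑ i ∈ s, f i) / #s) ^ #s := by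
        gcongr
        · exact prod_nonneg fun i hi => rpow_nonneg (hf i hi) _
        · simpa [← mul_sum, div_eq_inv_mul] using amgm

theorem exists_signs_sum_norm_sq_le_norm_sum_sq {ι E : Type*} [NormedAddCommGroup E]
    [InnerProductSpace ℝ E] (s : Finset ι) (v : ι → E) :
    ∃ ε : ι → ℝ, (∀ i, ε i = 1 ∨ ε i = -1) ∧ ∑ i ∈ s, ‖v i‖ ^ 2 ≤ ‖∑ i ∈ s, ε i • v i‖ ^ 2 := by
  classical
  induction s using Finset.induction_on with
  | empty => exact ⟨fun _ => 1, fun _ => Or.inl rfl, by simp⟩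
  | insert i s hi ih =>
    obtain ⟨ε, hε, hle⟩ := ih
    set u := ∑ j ∈ s, ε j • v j
    -- choose the sign of the new vector so that it does not point against the partial sum
    set σ : ℝ := if 0 ≤ inner ℝ (v i) u then 1 else -1
    have hσ : σ = 1 ∨ σ = -1 := by unfold σ; split_ifs <;> simp
    have hσinner : 0 ≤ inner ℝ (σ • v i) u := by
      rw [real_inner_smul_left]; unfold σ; split_ifs <;> linarith
    have hσnorm : ‖σ • v i‖ = ‖v i‖ := by rcases hσ with h | h <;> simp [h]
    refine ⟨Function.update ε i σ, fun j => ?_, ?_⟩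
    · rcases eq_or_ne j i with rfl | h
      · simpa using hσ
      · simpa [h] using hε j
    · have hu : ∑ j ∈ s, Function.update ε i σ j • v j = u :=
        sum_congr rfl fun j hj => by rw [Function.update_of_ne (ne_of_mem_of_not_mem hj hi)]
      rw [sum_insert hi, sum_insert hi, Function.update_self, hu, norm_add_sq_real, hσnorm]
      linarith

theorem Matrix.exists_signs_sum_sq_le_sum_sq_mulVec {m ι : Type*} [Fintype m] [Fintype ι]
    (A : Matrix m ι ℝ) :
    ∃ ε : ι → ℝ, (∀ i, ε i = 1 ∨ ε i = -1) ∧ ∑ i, ∑ j, A j i ^ 2 ≤ ∑ j, (A *ᵥ ε) j ^ 2 := by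
  obtain ⟨ε, hε, hle⟩ :=
    exists_signs_sum_norm_sq_le_norm_sum_sq univ fun i => WithLp.toLp 2 (Aᵀ i)
  have hsum : ∑ i, ε i • WithLp.toLp 2 (Aᵀ i) = WithLp.toLp 2 (A *ᵥ ε) := by
    ext j; simp [mulVec, dotProduct, mul_comm]
  refine ⟨ε, hε, ?_⟩
  simpa only [hsum, EuclideanSpace.real_norm_sq_eq, transpose_apply] using hle

theorem sqrt_sum_sq_inv_sqrt_sum_sq_smul {ι : Type*} [Fintype ι] {v : ι → ℝ}
    (hv : ∑ i, v i ^ 2 ≠ 0) : √(∑ i, ((√(∑ i, v i ^ 2))⁻¹ • v) i ^ 2) = 1 := by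
  simp only [Pi.smul_apply, smul_eq_mul, mul_pow, ← mul_sum, inv_pow,
    sq_sqrt (sum_nonneg fun i _ => sq_nonneg (v i)), inv_mul_cancel₀ hv, sqrt_one]

section

variable {ι : Type*} [Fintype ι] [DecidableEq ι]

theorem Matrix.det_sq_le_mean_sum_sq_pow (M : Matrix ι ι ℝ) :
    M.det ^ 2 ≤ ((∑ i, ∑ j, M j i ^ 2) / Fintype.card ι) ^ Fintype.card ι := by
  have hG : (Mᴴ * M).PosSemidef := posSemidef_conjTranspose_mul_self M
  have hdet : (Mᴴ * M).det = M.det ^ 2 := by simp [det_mul, sq]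
  have htrace : (Mᴴ * M).trace = ∑ i, ∑ j, M j i ^ 2 := by simp [trace, mul_apply, sq]
  rw [← hdet, hG.isHermitian.det_eq_prod_eigenvalues, ← htrace,
    hG.isHermitian.trace_eq_sum_eigenvalues]
  simpa using Real.prod_le_arith_mean_pow univ _ fun i _ => hG.eigenvalues_nonneg i

theorem Matrix.abs_det_le_prod_sqrt_sum_sq (W : Matrix ι ι ℝ) :
    |W.det| ≤ ∏ i, √(∑ j, W j i ^ 2) := by
  set r : ι → ℝ := fun i => √(∑ j, W j i ^ 2)
  by_cases hr : ∃ i, r i = 0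
  · obtain ⟨i, hi⟩ := hr
    have hsum : ∑ j, W j i ^ 2 = 0 := (sqrt_eq_zero (sum_nonneg fun j _ => sq_nonneg _)).1 hi
    have hcol : ∀ j, W j i = 0 := fun j => pow_eq_zero_iff two_ne_zero |>.1 <|
      congrFun ((Fintype.sum_eq_zero_iff_of_nonneg fun j => sq_nonneg (W j i)).1 hsum) j
    rw [det_eq_zero_of_column_eq_zero i hcol, abs_zero]
    positivity
  push Not at hr
  set B := W * diagonal fun i => (r i)⁻¹
  have hB : ∑ i, ∑ j, B j i ^ 2 = Fintype.card ι := by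
    have hcol : ∀ i, ∑ j, B j i ^ 2 = 1 := fun i => by
      simp only [B, mul_diagonal, mul_pow, ← sum_mul]
      rw [← sq_sqrt (sum_nonneg fun j _ => sq_nonneg (W j i)), ← mul_pow, mul_inv_cancel₀ (hr i),
        one_pow]
    simp [hcol]
  have hdetB : |B.det| ≤ 1 := by
    rw [← sq_le_one_iff_abs_le_one]
    refine B.det_sq_le_mean_sum_sq_pow.trans_eq ?_
    by_cases h : (Fintype.card ι : ℝ) = 0 <;> simp_all
  have hprod : 0 < ∏ i, r i := prod_pos fun i _ => (sqrt_nonneg _).lt_of_ne' (hr i)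
  calc |W.det| = |B.det| * ∏ i, r i := by
        rw [det_mul, det_diagonal, prod_inv_distrib, abs_mul, abs_inv, abs_of_pos hprod, mul_assoc,
          inv_mul_cancel₀ hprod.ne', mul_one]
    _ ≤ ∏ i, r i := mul_le_of_le_one_left (prod_nonneg fun i _ => sqrt_nonneg _) hdetB

theorem Matrix.exists_sqrt_sum_sq_eq_one_mulVec_eq_zero {W : Matrix ι ι ℝ} (h : W.det = 0) :
    ∃ x : ι → ℝ, √(∑ i, x i ^ 2) = 1 ∧ W *ᵥ x = 0 := by
  obtain ⟨v, hv, hWv⟩ := exists_mulVec_eq_zero_iff.2 h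
  have hv2 : ∑ i, v i ^ 2 ≠ 0 := by simpa [dotProduct, sq] using mt dotProduct_self_eq_zero.1 hv
  exact ⟨_, sqrt_sum_sq_inv_sqrt_sum_sq_smul hv2, by rw [mulVec_smul, hWv, smul_zero]⟩

theorem Matrix.exists_sqrt_sum_sq_eq_one_norm_mulVec_le_of_abs_det_le_one [Nonempty ι]
    {W : Matrix ι ι ℝ} (hW₀ : W.det ≠ 0) (hW₁ : |W.det| ≤ 1) :
    ∃ x : ι → ℝ, √(∑ i, x i ^ 2) = 1 ∧ ‖W *ᵥ x‖ ≤ 1 / √(Fintype.card ι) := by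
  set n := Fintype.card ι
  have hn : (0 : ℝ) < n := by exact_mod_cast Fintype.card_pos
  have hdet : 1 ≤ W⁻¹.det ^ 2 := by
    rw [det_nonsing_inv, Ring.inverse_eq_inv', inv_pow, one_le_inv₀ (by positivity), ← sq_abs]
    exact pow_le_one₀ (abs_nonneg _) hW₁
  have hfrob : (n : ℝ) ≤ ∑ i, ∑ j, W⁻¹ j i ^ 2 := by
    have := hdet.trans W⁻¹.det_sq_le_mean_sum_sq_pow
    rwa [one_le_pow_iff_of_nonneg (by positivity) Fintype.card_ne_zero, one_le_div hn] at this
  obtain ⟨ε, hε, hle⟩ := W⁻¹.exists_signs_sum_sq_le_sum_sq_mulVec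
  set v := W⁻¹ *ᵥ ε
  have hv : n ≤ ∑ j, v j ^ 2 := hfrob.trans hle
  refine ⟨_, sqrt_sum_sq_inv_sqrt_sum_sq_smul (hn.trans_le hv).ne', ?_⟩
  have hWv : W *ᵥ v = ε := by
    rw [mulVec_mulVec, mul_nonsing_inv _ (isUnit_iff_ne_zero.2 hW₀), one_mulVec]
  have hε₁ : ‖ε‖ ≤ 1 := (pi_norm_le_iff_of_nonneg zero_le_one).2 fun i => by
    rcases hε i with h | h <;> simp [h]
  rw [mulVec_smul, hWv, norm_smul, norm_inv, norm_of_nonneg (sqrt_nonneg _), one_div]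
  calc (√(∑ j, v j ^ 2))⁻¹ * ‖ε‖ ≤ (√(∑ j, v j ^ 2))⁻¹ := mul_le_of_le_one_right (by positivity) hε₁
    _ ≤ (√n)⁻¹ := by gcongr

end

/-- Spherical Komlós with mean-norm hypothesis. -/
theorem spherical_komlos_mean :
    ∃ C : ℝ, 0 < C ∧ ∀ n : ℕ, 1 ≤ n → ∀ W : Matrix (Fin n) (Fin n) ℝ,
      (1 / n : ℝ) * ∑ i, Real.sqrt (∑ j, W j i ^ 2) ≤ 1 →
      ∃ x : Fin n → ℝ, Real.sqrt (∑ i, x i ^ 2) = 1 ∧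
        ‖W.mulVec x‖ ≤ C / Real.sqrt n := by
  refine ⟨1, one_pos, fun n hn W hW => ?_⟩
  have : Nonempty (Fin n) := ⟨⟨0, hn⟩⟩
  by_cases hdet : W.det = 0
  · obtain ⟨x, hx, hWx⟩ := exists_sqrt_sum_sq_eq_one_mulVec_eq_zero hdet
    exact ⟨x, hx, by rw [hWx, norm_zero]; positivity⟩
  · have hmean : (∑ i, √(∑ j, W j i ^ 2)) / n ≤ 1 := by rwa [div_eq_inv_mul, ← one_div]
    have hdet₁ : |W.det| ≤ 1 := by
      refine W.abs_det_le_prod_sqrt_sum_sq.trans <|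
        (prod_le_arith_mean_pow univ _ fun i _ => sqrt_nonneg _).trans ?_
      simpa using pow_le_one₀ (by positivity) hmean
    simpa using exists_sqrt_sum_sq_eq_one_norm_mulVec_le_of_abs_det_le_one hdet hdet₁
end

section
/- There exists a constant C > 0 such that for every n ≥ 1 and every collection of vectors w₁,…,wₙ ∈ ℝⁿ with ‖wᵢ‖₂ ≤ 1 for each i, there exists a unit vector x ∈ ℝⁿ such that max_i |⟨wᵢ, x⟩| ≤ C/√n. -/
/-!
Let `W` be the matrix with rows `wᵢ`. Since the rows have norm at most `1`, AM-GM on the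
eigenvalues of `W Wᵀ` gives `|det W| ≤ 1`, so the body `K = {x | ‖W x‖_∞ ≤ 1}` has volume
`2ⁿ / |det W| ≥ 2ⁿ` (or contains a whole line when `W` is singular). The `ℓ¹`-ball of radius `n/3`
has volume `(2n/3)ⁿ / n! < 2ⁿ`, so `K` contains a point `x` with `‖x‖₁ ≥ n/3`, hence
`‖x‖₂ ≥ √n/3`. Then `x / ‖x‖₂` is a unit vector with `|⟨wᵢ, x / ‖x‖₂⟩| ≤ 3/√n`.
-/

open Real Matrix MeasureTheory Finset Metric
open scoped Nat

theorem Real.prod_le_sum_div_card_pow {ι : Type*} (s : Finset ι) {z : ι → ℝ}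
    (hz : ∀ i ∈ s, 0 ≤ z i) : ∏ i ∈ s, z i ≤ ((∑ i ∈ s, z i) / #s) ^ #s := by
  rcases s.eq_empty_or_nonempty with rfl | hs
  · simp
  have hcard : (0 : ℝ) < #s := by exact_mod_cast hs.card_pos
  have amgm : ∏ i ∈ s, z i ^ (#s : ℝ)⁻¹ ≤ ∑ i ∈ s, (#s : ℝ)⁻¹ * z i :=
    geom_mean_le_arith_mean_weighted s _ z (fun _ _ => by positivity)
      (by simp [hcard.ne']) hz
  rw [finsetProd_rpow s z hz, ← mul_sum, inv_mul_eq_div] at amgm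
  calc ∏ i ∈ s, z i = ((∏ i ∈ s, z i) ^ (#s : ℝ)⁻¹) ^ #s := by
        rw [← rpow_natCast, ← rpow_mul (prod_nonneg hz), inv_mul_cancel₀ hcard.ne', rpow_one]
    _ ≤ ((∑ i ∈ s, z i) / #s) ^ #s := by gcongr; exact rpow_nonneg (prod_nonneg hz) _

theorem Finset.sum_abs_le_sqrt_card_mul_sqrt_sum_sq {ι : Type*} (s : Finset ι) (x : ι → ℝ) :
    ∑ i ∈ s, |x i| ≤ √(#s : ℝ) * √(∑ i ∈ s, x i ^ 2) := by
  rw [← sqrt_mul (Nat.cast_nonneg _), le_sqrt (by positivity) (by positivity)]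
  simpa using sq_sum_le_card_mul_sum_sq (s := s) (f := fun i => |x i|)

theorem Nat.pow_div_three_lt_factorial {n : ℕ} (hn : n ≠ 0) : ((n : ℝ) / 3) ^ n < n ! := by
  have hfac : (0 : ℝ) < n ! := by positivity
  have he : exp 1 < 3 := exp_one_lt_d9.trans (by norm_num)
  calc ((n : ℝ) / 3) ^ n < (n / exp 1) ^ n := by gcongr
    _ = n ^ n / exp n := by rw [div_pow, ← exp_nat_mul, mul_one]
    _ ≤ n ! := by
        rw [div_le_iff₀ (exp_pos _), mul_comm, ← div_le_iff₀ hfac]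
        exact pow_div_factorial_le_exp _ (Nat.cast_nonneg n) n

theorem volume_sum_abs_lt {ι : Type*} [Fintype ι] [Nonempty ι] (r : ℝ) :
    volume {x : ι → ℝ | ∑ i, |x i| < r} =
      ENNReal.ofReal r ^ Fintype.card ι *
        ENNReal.ofReal (2 ^ Fintype.card ι / (Fintype.card ι)!) := by
  simpa [Gamma_nat_eq_factorial, one_add_one_eq_two] using volume_sum_rpow_lt ι le_rfl r

namespace Matrix

variable {ι : Type*} [Fintype ι] [DecidableEq ι]

theorem PosSemidef.det_le_trace_div_card_pow {A : Matrix ι ι ℝ} (hA : A.PosSemidef) :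
    A.det ≤ (A.trace / Fintype.card ι) ^ Fintype.card ι := by
  rw [hA.isHermitian.det_eq_prod_eigenvalues, hA.isHermitian.trace_eq_sum_eigenvalues]
  simpa using prod_le_sum_div_card_pow univ fun i _ => hA.eigenvalues_nonneg i

theorem abs_det_le_one_of_sum_sq_le_one {M : Matrix ι ι ℝ} (hM : ∀ i, ∑ j, M i j ^ 2 ≤ 1) :
    |M.det| ≤ 1 := by
  have hpsd : (M * Mᵀ).PosSemidef := by simpa using posSemidef_self_mul_conjTranspose M
  have htrace : (M * Mᵀ).trace ≤ Fintype.card ι := by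
    simpa [trace, mul_apply, ← sq] using sum_le_sum fun i (_ : i ∈ univ) => hM i
  rw [← sq_le_one_iff_abs_le_one]
  calc M.det ^ 2 = (M * Mᵀ).det := by rw [det_mul, det_transpose, sq]
    _ ≤ ((M * Mᵀ).trace / Fintype.card ι) ^ Fintype.card ι := hpsd.det_le_trace_div_card_pow
    _ ≤ 1 := pow_le_one₀ (div_nonneg hpsd.trace_nonneg (Nat.cast_nonneg _))
        (div_le_one_of_le₀ htrace (Nat.cast_nonneg _))

theorem volume_preimage_mulVec_closedBall {M : Matrix ι ι ℝ} (hM : M.det ≠ 0) {r : ℝ}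
    (hr : 0 ≤ r) :
    volume ((M *ᵥ ·) ⁻¹' closedBall 0 r) =
      ENNReal.ofReal |M.det|⁻¹ * ENNReal.ofReal ((2 * r) ^ Fintype.card ι) := by
  have := Measure.addHaar_preimage_linearMap volume (f := toLin' M)
    (by rwa [LinearMap.det_toLin']) (closedBall 0 r)
  rwa [LinearMap.det_toLin', Real.volume_pi_closedBall _ hr, abs_inv] at this

theorem exists_mulVec_eq_zero_le_sum_abs {M : Matrix ι ι ℝ} (hM : M.det = 0) (r : ℝ) :
    ∃ x, M *ᵥ x = 0 ∧ r ≤ ∑ i, |x i| := by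
  obtain ⟨v, hv0, hMv⟩ := exists_mulVec_eq_zero_iff.mpr hM
  have hv : 0 < ∑ i, |v i| := by
    obtain ⟨i, hi⟩ := Function.ne_iff.mp hv0
    exact sum_pos' (fun i _ => abs_nonneg _) ⟨i, mem_univ i, abs_pos.mpr hi⟩
  refine ⟨(|r| / ∑ i, |v i|) • v, by rw [mulVec_smul, hMv, smul_zero], ?_⟩
  simp only [Pi.smul_apply, smul_eq_mul, abs_mul, abs_div, abs_abs, ← mul_sum, abs_of_pos hv,
    div_mul_cancel₀ _ hv.ne']
  exact le_abs_self r

theorem exists_norm_mulVec_le_one_card_div_three_le_sum_abs {M : Matrix ι ι ℝ}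
    (hM : |M.det| ≤ 1) : ∃ x : ι → ℝ, ‖M *ᵥ x‖ ≤ 1 ∧ (Fintype.card ι : ℝ) / 3 ≤ ∑ i, |x i| := by
  rcases isEmpty_or_nonempty ι with hι | hι
  · exact ⟨0, by simp, by simp⟩
  rcases eq_or_ne M.det 0 with hdet | hdet
  · obtain ⟨x, hMx, hx⟩ := exists_mulVec_eq_zero_le_sum_abs hdet (Fintype.card ι / 3)
    exact ⟨x, by simp [hMx], hx⟩
  by_contra! hsmall
  set n := Fintype.card ι
  have hsub : (M *ᵥ ·) ⁻¹' closedBall 0 1 ⊆ {x | ∑ i, |x i| < n / 3} := fun x hx =>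
    hsmall x (mem_closedBall_zero_iff.mp hx)
  have hvol := (measure_mono (μ := volume) hsub).trans_eq (volume_sum_abs_lt _)
  rw [volume_preimage_mulVec_closedBall hdet zero_le_one, ← ENNReal.ofReal_pow (by positivity),
    ← ENNReal.ofReal_mul (by positivity), ← ENNReal.ofReal_mul (by positivity),
    ENNReal.ofReal_le_ofReal_iff (by positivity), mul_one, mul_div_assoc',
    le_div_iff₀ (by positivity)] at hvol
  change |M.det|⁻¹ * 2 ^ n * n ! ≤ (n / 3) ^ n * 2 ^ n at hvol
  have hdet_inv : 1 ≤ |M.det|⁻¹ := (one_le_inv₀ (abs_pos.mpr hdet)).mpr hM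
  have hfac_le : (n ! : ℝ) ≤ (n / 3) ^ n := by
    refine le_of_mul_le_mul_right ?_ (by positivity : (0 : ℝ) < 2 ^ n)
    calc (n ! : ℝ) * 2 ^ n = 1 * 2 ^ n * n ! := by ring
      _ ≤ |M.det|⁻¹ * 2 ^ n * n ! := by gcongr
      _ ≤ (n / 3) ^ n * 2 ^ n := hvol
  exact (Nat.pow_div_three_lt_factorial Fintype.card_ne_zero).not_ge hfac_le

end Matrix

/-- Spherical relaxation of the Komlós conjecture. -/
theorem spherical_komlos :
    ∃ C : ℝ, 0 < C ∧ ∀ n : ℕ, 1 ≤ n → ∀ w : Fin n → Fin n → ℝ,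
      (∀ i, Real.sqrt (∑ j, w i j ^ 2) ≤ 1) →
      ∃ x : Fin n → ℝ, Real.sqrt (∑ i, x i ^ 2) = 1 ∧
        ∀ i, |∑ j, w i j * x j| ≤ C / Real.sqrt n := by
  refine ⟨3, by norm_num, fun n hn w hw => ?_⟩
  obtain ⟨x, hWx, hx⟩ := (Matrix.of w).exists_norm_mulVec_le_one_card_div_three_le_sum_abs
    (abs_det_le_one_of_sum_sq_le_one fun i => sqrt_le_one.mp (hw i))
  set s := √(∑ j, x j ^ 2) with hs_def
  have hn : 0 < √n := sqrt_pos.mpr (by exact_mod_cast hn)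
  have hs : √n / 3 ≤ s := by
    have h := hx.trans (sum_abs_le_sqrt_card_mul_sqrt_sum_sq univ x)
    rw [card_univ, Fintype.card_fin] at h
    refine le_of_mul_le_mul_left ?_ hn
    rwa [← mul_div_assoc, mul_self_sqrt (Nat.cast_nonneg n)]
  have hs0 : 0 < s := (div_pos hn three_pos).trans_le hs
  refine ⟨fun j => x j / s, ?_, fun i => ?_⟩
  · simp_rw [div_pow, ← sum_div, hs_def, sq_sqrt (sum_nonneg fun j _ => sq_nonneg (x j))]
    rw [div_self (sqrt_pos.mp hs0).ne', sqrt_one]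
  · calc |∑ j, w i j * (x j / s)| = |(Matrix.of w *ᵥ x) i| / s := by
          simp [mulVec, dotProduct, mul_div_assoc', ← sum_div, abs_div, abs_of_pos hs0]
      _ ≤ 1 / s := by gcongr; exact (norm_le_pi_norm _ i).trans hWx
      _ ≤ 3 / √n := by rw [div_le_div_iff₀ hs0 hn]; linarith
end

section
/- Let W be a nonsingular n×n real matrix and let α > 0 satisfy: for all x with ‖x‖₂ = 1, ‖Wx‖_∞ ≥ α. Then |det W| ≥ αⁿ · 2ⁿ · Γ(n/2+1) / π^{n/2}. -/
open Matrix Real MeasureTheory Metric Module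

/-! Scaling the hypothesis gives `α ‖x‖₂ ≤ ‖W x‖_∞`, so `W` is invertible and maps the open
Euclidean unit ball onto a set containing the sup-norm ball of radius `α`, the cube `(-α, α)ⁿ`.
Comparing Lebesgue measures, `(2α)ⁿ ≤ |det W| · √πⁿ / Γ(n/2 + 1)`. -/

section LowerBound

variable {E F : Type*} [NormedAddCommGroup E] [NormedSpace ℝ E]
  [NormedAddCommGroup F] [NormedSpace ℝ F]

theorem LinearMap.mul_norm_le_norm_apply_of_forall_norm_eq_one {f : E →ₗ[ℝ] F} {α : ℝ}
    (h : ∀ x, ‖x‖ = 1 → α ≤ ‖f x‖) (x : E) : α * ‖x‖ ≤ ‖f x‖ := by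
  rcases eq_or_ne x 0 with rfl | hx
  · simp
  have hpos : 0 < ‖x‖ := norm_pos_iff.mpr hx
  have := h (‖x‖⁻¹ • x) (norm_smul_inv_norm hx)
  rwa [map_smul, norm_smul, norm_inv, norm_norm, inv_mul_eq_div, le_div_iff₀ hpos] at this

/-- The lower bound makes `f` injective, hence bijective by the dimension count. -/
theorem LinearMap.ball_subset_image_ball_of_forall_norm_eq_one
    [FiniteDimensional ℝ E] [FiniteDimensional ℝ F] (hdim : finrank ℝ E = finrank ℝ F)
    {f : E →ₗ[ℝ] F} {α : ℝ} (hα : 0 < α) (h : ∀ x, ‖x‖ = 1 → α ≤ ‖f x‖) :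
    ball 0 α ⊆ f '' ball 0 1 := by
  have hlow := f.mul_norm_le_norm_apply_of_forall_norm_eq_one h
  have hinj : Function.Injective f := by
    refine (injective_iff_map_eq_zero f).mpr fun x hx => norm_le_zero_iff.mp ?_
    have := hlow x
    rw [hx, norm_zero] at this
    exact nonpos_of_mul_nonpos_right this hα
  intro y hy
  obtain ⟨x, rfl⟩ := (LinearMap.injective_iff_surjective_of_finrank_eq_finrank hdim).mp hinj y
  refine ⟨x, ?_, rfl⟩
  rw [mem_ball_zero_iff] at hy ⊢
  exact lt_of_mul_lt_mul_left (by linarith [hlow x]) hα.le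

end LowerBound

theorem EuclideanSpace.volume_ball_zero_one (ι : Type*) [Fintype ι] :
    volume (ball (0 : EuclideanSpace ℝ ι) 1) =
      .ofReal (√π ^ Fintype.card ι / Gamma (Fintype.card ι / 2 + 1)) := by
  rcases isEmpty_or_nonempty ι with hι | hι
  · rw [volume_euclideanSpace_eq_dirac, Measure.dirac_apply_of_mem (mem_ball_self one_pos)]
    simp
  · rw [EuclideanSpace.volume_ball, ENNReal.ofReal_one, one_pow, one_mul]

theorem det_ge_of_min_sup_norm_general
    (n : ℕ) (W : Matrix (Fin n) (Fin n) ℝ)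
    (α : ℝ) (hα : 0 < α)
    (h : ∀ x : Fin n → ℝ, Real.sqrt (∑ i, x i ^ 2) = 1 → α ≤ ‖W.mulVec x‖) :
    α ^ n * 2 ^ n * Real.Gamma ((n : ℝ) / 2 + 1) / π ^ ((n : ℝ) / 2) ≤ |W.det| := by
  have hsub : ball 0 α ⊆ toLin' W '' (WithLp.toLp 2 ⁻¹' ball 0 1) := by
    have := ((toLin' W).comp (WithLp.linearEquiv 2 ℝ (Fin n → ℝ)).toLinearMap
      ).ball_subset_image_ball_of_forall_norm_eq_one (by simp) hα fun x hx =>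
        h x.ofLp (by simpa [EuclideanSpace.norm_eq] using hx)
    rwa [LinearMap.coe_comp, Set.image_comp, LinearEquiv.coe_coe,
      LinearEquiv.image_eq_preimage_symm] at this
  have hvol : (2 * α) ^ n ≤ |W.det| * (√π ^ n / Gamma ((n : ℝ) / 2 + 1)) := by
    have := measure_mono (μ := volume) hsub
    rwa [Real.volume_pi_ball 0 hα, Measure.addHaar_image_linearMap, LinearMap.det_toLin',
      (PiLp.volume_preserving_toLp (Fin n)).measure_preimage measurableSet_ball.nullMeasurableSet,
      EuclideanSpace.volume_ball_zero_one, Fintype.card_fin, ← ENNReal.ofReal_mul (abs_nonneg _),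
      ENNReal.ofReal_le_ofReal_iff (by positivity)] at this
  have hΓ : 0 < Gamma ((n : ℝ) / 2 + 1) := Gamma_pos_of_pos (by positivity)
  rw [rpow_div_two_eq_sqrt _ pi_pos.le, rpow_natCast, div_le_iff₀ (by positivity)]
  calc α ^ n * 2 ^ n * Gamma ((n : ℝ) / 2 + 1) = (2 * α) ^ n * Gamma ((n : ℝ) / 2 + 1) := by ring
    _ ≤ |W.det| * (√π ^ n / Gamma ((n : ℝ) / 2 + 1)) * Gamma ((n : ℝ) / 2 + 1) := by gcongr
    _ = |W.det| * √π ^ n := by field_simp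

/-- If `‖Wx‖_∞ ≥ α` on the Euclidean unit sphere, then
`|det W| ≥ αⁿ · 2ⁿ · Γ(n/2+1) / π^{n/2}`. -/
theorem det_ge_of_min_sup_norm
    (n : ℕ) (W : Matrix (Fin n) (Fin n) ℝ) (hW : W.det ≠ 0)
    (α : ℝ) (hα : 0 < α)
    (h : ∀ x : Fin n → ℝ, Real.sqrt (∑ i, x i ^ 2) = 1 → α ≤ ‖W.mulVec x‖) :
    α ^ n * 2 ^ n * Real.Gamma ((n : ℝ) / 2 + 1) / π ^ ((n : ℝ) / 2) ≤ |W.det| :=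
  det_ge_of_min_sup_norm_general n W α hα h
end
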